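/- arXiv:2012.10406 — 4 statements merged into one kernel-verified Lean document; each statement's English description precedes it below -/
import Mathlib

section
/- Let (b, B, m, μ) be an admissible parameter set. Then the functions F : K → ℝ and R : K → H are continuous on K with respect to the norm topology of H. -/
open MeasureTheory Filter
open scoped RealInnerProductSpace Topology ENNReal

noncomputable section

def IsSelfDualCone {H : Type*} [NormedAddCommGroup H] [InnerProductSpace ℝ H]
    (K : Set H) : Prop :=
  K = {x : H | ∀ y ∈ K, 0 ≤ ⟪x, y⟫}

def trunc {H : Type*} [NormedAddCommGroup H] [InnerProductSpace ℝ H] (ξ : H) : H :=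
  if ‖ξ‖ ≤ 1 then ξ else 0

structure AdmissibleParams (H : Type*) [NormedAddCommGroup H] [InnerProductSpace ℝ H]
    [CompleteSpace H] [MeasurableSpace H] [BorelSpace H] (K : Set H) where
  b : H
  B : H →L[ℝ] H
  m : Measure H
  ν : H → Measure H
  muVec : Set H → H
  m_support : m ((K \ {0})ᶜ) = 0
  m_sq : IntegrableOn (fun ξ : H => ‖ξ‖ ^ 2) (K \ {0}) m
  m_chi : ∀ h : H, IntegrableOn (fun ξ : H => |⟪trunc ξ, h⟫|) (K \ {0}) m
  m_Im : ∃ Im : H, ∀ h : H, ⟪Im, h⟫ = ∫ ξ in K \ {0}, ⟪trunc ξ, h⟫ ∂m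
  b_drift : ∀ v ∈ K, 0 ≤ ⟪b, v⟫ - ∫ ξ in K \ {0}, ⟪trunc ξ, v⟫ ∂m
  ν_finite : ∀ x ∈ K, IsFiniteMeasure (ν x)
  ν_support : ∀ x ∈ K, ν x ((K \ {0})ᶜ) = 0
  ν_add : ∀ x ∈ K, ∀ y ∈ K, ν (x + y) = ν x + ν y
  ν_smul : ∀ x ∈ K, ∀ c : ℝ, 0 ≤ c → ν (c • x) = ENNReal.ofReal c • ν x
  ν_int : ∀ u ∈ K, ∀ x ∈ K, ⟪u, x⟫ = 0 →
    IntegrableOn (fun ξ : H => ⟪trunc ξ, u⟫ / ‖ξ‖ ^ 2) (K \ {0}) (ν x)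
  B_quasi : ∀ u ∈ K, ∀ x ∈ K, ⟪u, x⟫ = 0 →
    0 ≤ ⟪ContinuousLinearMap.adjoint B u, x⟫
      - ∫ ξ in K \ {0}, ⟪trunc ξ, u⟫ / ‖ξ‖ ^ 2 ∂(ν x)
  muVec_mem : ∀ S : Set H, MeasurableSet S → muVec S ∈ K
  muVec_spec : ∀ S : Set H, MeasurableSet S → ∀ x ∈ K, ⟪muVec S, x⟫ = (ν x S).toReal

/-! ### Auxiliary scalar inequalities -/

lemma exp_mul_le_one {t : ℝ} : Real.exp (-t) * (1 + t) ≤ 1 := by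
  have h := Real.add_one_le_exp t
  have h2 : Real.exp (-t) * (1 + t) ≤ Real.exp (-t) * Real.exp t :=
    mul_le_mul_of_nonneg_left (by linarith) (Real.exp_pos _).le
  rwa [← Real.exp_add, neg_add_cancel, Real.exp_zero] at h2

lemma exp_sub_add_nonneg (t : ℝ) : 0 ≤ Real.exp (-t) - 1 + t := by
  have := Real.add_one_le_exp (-t); linarith

lemma exp_sub_add_le_sq {t : ℝ} (ht : 0 ≤ t) : Real.exp (-t) - 1 + t ≤ t ^ 2 := by
  have h1 : Real.exp (-t) * (1 + t) ≤ 1 := exp_mul_le_one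
  have h2 := Real.add_one_le_exp (-t)
  nlinarith

lemma flip_mono {a b : ℝ} (hb : 0 ≤ b) (hba : b ≤ a) :
    0 ≤ (Real.exp (-a) - 1 + a) - (Real.exp (-b) - 1 + b) := by
  have hd : (0:ℝ) ≤ a - b := by linarith
  have he : Real.exp (-a) = Real.exp (-b) * Real.exp (-(a - b)) := by
    rw [← Real.exp_add]; ring_nf
  have h1 := Real.add_one_le_exp (-(a - b))
  have h2 : Real.exp (-b) ≤ 1 := Real.exp_le_one_iff.mpr (by linarith)
  have h3 := (Real.exp_pos (-b)).le
  nlinarith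

lemma flip_lip {a b : ℝ} (hb : 0 ≤ b) (hba : b ≤ a) :
    (Real.exp (-a) - 1 + a) - (Real.exp (-b) - 1 + b) ≤ 2 * (a - b) * (a + b) := by
  have hd : (0:ℝ) ≤ a - b := by linarith
  have he : Real.exp (-a) = Real.exp (-b) * Real.exp (-(a - b)) := by
    rw [← Real.exp_add]; ring_nf
  have h1 := exp_sub_add_le_sq hd
  have h2 : Real.exp (-b) ≤ 1 := Real.exp_le_one_iff.mpr (by linarith)
  have h4 := Real.add_one_le_exp (-b)
  have h3 := (Real.exp_pos (-b)).le
  nlinarith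

lemma abs_flip {a b : ℝ} (ha : 0 ≤ a) (hb : 0 ≤ b) :
    |(Real.exp (-a) - 1 + a) - (Real.exp (-b) - 1 + b)| ≤ 2 * |a - b| * (a + b) := by
  rcases le_total b a with h | h
  · rw [abs_of_nonneg (flip_mono hb h), abs_of_nonneg (by linarith)]
    exact flip_lip hb h
  · rw [abs_sub_comm, abs_of_nonneg (flip_mono ha h), abs_sub_comm a b,
      abs_of_nonneg (by linarith)]
    linarith [flip_lip ha h]

lemma abs_exp_exp {a b : ℝ} (ha : 0 ≤ a) (hb : 0 ≤ b) :
    |Real.exp (-a) - Real.exp (-b)| ≤ |a - b| := by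
  have key : ∀ x y : ℝ, 0 ≤ y → y ≤ x → Real.exp (-y) - Real.exp (-x) ≤ x - y := by
    intro x y hy hyx
    have he : Real.exp (-x) = Real.exp (-y) * Real.exp (-(x - y)) := by
      rw [← Real.exp_add]; ring_nf
    have h1 := Real.add_one_le_exp (-(x - y))
    have h2 : Real.exp (-y) ≤ 1 := Real.exp_le_one_iff.mpr (by linarith)
    have h3 := (Real.exp_pos (-y)).le
    nlinarith
  rcases le_total b a with h | h
  · rw [abs_of_nonpos (by have := Real.exp_le_exp.mpr (neg_le_neg h); linarith),
      abs_of_nonneg (by linarith)]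
    linarith [key a b hb h]
  · rw [abs_of_nonneg (by have := Real.exp_le_exp.mpr (neg_le_neg h); linarith),
      abs_of_nonpos (by linarith : a - b ≤ 0)]
    linarith [key b a ha h]

/-! ### Self-dual cone facts -/

section Cone
variable {H : Type*} [NormedAddCommGroup H] [InnerProductSpace ℝ H] {K : Set H}

lemma sdc_mem (hK : IsSelfDualCone K) {x : H} : x ∈ K ↔ ∀ y ∈ K, 0 ≤ ⟪x, y⟫ := by
  conv_lhs => rw [hK]
  rfl

lemma sdc_inner_nonneg (hK : IsSelfDualCone K) {x y : H} (hx : x ∈ K) (hy : y ∈ K) :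
    0 ≤ ⟪x, y⟫ := (sdc_mem hK).1 hx y hy

lemma sdc_zero_mem (hK : IsSelfDualCone K) : (0 : H) ∈ K :=
  (sdc_mem hK).2 fun y _ => by simp

lemma sdc_add (hK : IsSelfDualCone K) {x y : H} (hx : x ∈ K) (hy : y ∈ K) : x + y ∈ K :=
  (sdc_mem hK).2 fun z hz => by
    rw [inner_add_left]
    exact add_nonneg (sdc_inner_nonneg hK hx hz) (sdc_inner_nonneg hK hy hz)

lemma sdc_smul (hK : IsSelfDualCone K) {x : H} {c : ℝ} (hc : 0 ≤ c) (hx : x ∈ K) :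
    c • x ∈ K :=
  (sdc_mem hK).2 fun z hz => by
    rw [real_inner_smul_left]
    exact mul_nonneg hc (sdc_inner_nonneg hK hx hz)

lemma sdc_closed (hK : IsSelfDualCone K) : IsClosed K := by
  have h : K = ⋂ y ∈ K, {x : H | 0 ≤ ⟪x, y⟫} := by
    conv_lhs => rw [hK]
    ext x; simp
  rw [h]
  exact isClosed_biInter fun y _ =>
    isClosed_le continuous_const (Continuous.inner continuous_id continuous_const)

lemma sdc_convex (hK : IsSelfDualCone K) : Convex ℝ K := fun x hx y hy a b ha hb _ =>
  sdc_add hK (sdc_smul hK ha hx) (sdc_smul hK hb hy)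

lemma moreau [CompleteSpace H] (hK : IsSelfDualCone K) (w : H) :
    ∃ x ∈ K, ∃ y ∈ K, w = x - y ∧ ⟪x, y⟫ = 0 := by
  obtain ⟨v, hv, hnorm⟩ := exists_norm_eq_iInf_of_complete_convex
    ⟨0, sdc_zero_mem hK⟩ (sdc_closed hK).isComplete (sdc_convex hK) w
  have hchar := (norm_eq_iInf_iff_real_inner_le_zero (sdc_convex hK) hv).1 hnorm
  have hy : v - w ∈ K := by
    refine (sdc_mem hK).2 fun z hz => ?_
    have h1 := hchar (v + z) (sdc_add hK hv hz)
    have h2 : ⟪w - v, z⟫ ≤ 0 := by simpa using h1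
    have h3 : ⟪v - w, z⟫ = -⟪w - v, z⟫ := by
      rw [← inner_neg_left]; congr 1; abel
    rw [h3]; linarith
  have h0 := hchar 0 (sdc_zero_mem hK)
  have h2v := hchar ((2:ℝ) • v) (sdc_smul hK (by norm_num) hv)
  have hz : ⟪w - v, v⟫ = 0 := by
    have e1 : ⟪w - v, (0:H) - v⟫ = -⟪w - v, v⟫ := by
      rw [zero_sub, inner_neg_right]
    have e2 : ⟪w - v, (2:ℝ) • v - v⟫ = ⟪w - v, v⟫ := by
      have h : (2:ℝ) • v - v = v := by rw [two_smul]; abel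
      rw [h]
    rw [e1] at h0; rw [e2] at h2v; linarith
  refine ⟨v, hv, v - w, hy, by abel, ?_⟩
  have h : ⟪v, v - w⟫ = -⟪w - v, v⟫ := by
    rw [real_inner_comm, ← inner_neg_left]; congr 1; abel
  rw [h, hz, neg_zero]

lemma sdc_norm_le_of_inner_le [CompleteSpace H] (hK : IsSelfDualCone K) {w : H} {C : ℝ}
    (hC : 0 ≤ C) (h : ∀ x ∈ K, |⟪w, x⟫| ≤ C * ‖x‖) : ‖w‖ ≤ 2 * C := by
  obtain ⟨x, hx, y, hy, hw, hxy⟩ := moreau hK w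
  have hpyth : ‖w‖ ^ 2 = ‖x‖ ^ 2 + ‖y‖ ^ 2 := by
    have h1 : ‖w‖ ^ 2 = ‖x‖ ^ 2 - 2 * ⟪x, y⟫ + ‖y‖ ^ 2 := by
      rw [hw]; exact norm_sub_sq_real x y
    rw [hxy] at h1; linarith
  have hx' : ‖x‖ ≤ ‖w‖ := by nlinarith [norm_nonneg x, norm_nonneg w, sq_nonneg ‖y‖]
  have hy' : ‖y‖ ≤ ‖w‖ := by nlinarith [norm_nonneg y, norm_nonneg w, sq_nonneg ‖x‖]
  have hsq : ‖w‖ ^ 2 ≤ 2 * C * ‖w‖ := by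
    have e : (‖w‖:ℝ) ^ 2 = ⟪w, x⟫ - ⟪w, y⟫ := by
      rw [← real_inner_self_eq_norm_sq, hw, inner_sub_right]
    rw [e]
    have b1 := abs_le.1 (h x hx)
    have b2 := abs_le.1 (h y hy)
    nlinarith [mul_le_mul_of_nonneg_left hx' hC, mul_le_mul_of_nonneg_left hy' hC]
  rcases (norm_nonneg w).eq_or_lt with h0 | h0
  · rw [← h0]; linarith
  · have := le_of_mul_le_mul_right (by nlinarith : ‖w‖ * ‖w‖ ≤ 2 * C * ‖w‖) h0
    linarith

end Cone

/-! ### Pointwise bounds on the integrand -/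

section Pointwise
variable {H : Type*} [NormedAddCommGroup H] [InnerProductSpace ℝ H]

lemma G_bound {ξ u : H} (h : 0 ≤ ⟪ξ, u⟫) :
    |Real.exp (-⟪ξ, u⟫) - 1 + ⟪trunc ξ, u⟫| ≤ max (‖u‖ ^ 2) 1 * ‖ξ‖ ^ 2 := by
  by_cases hξ : ‖ξ‖ ≤ 1
  · rw [trunc, if_pos hξ]
    rw [abs_of_nonneg (exp_sub_add_nonneg _)]
    have h1 := exp_sub_add_le_sq h
    have h2 : ⟪ξ, u⟫ ≤ ‖ξ‖ * ‖u‖ := real_inner_le_norm ξ u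
    have h3 : ⟪ξ, u⟫ ^ 2 ≤ (‖ξ‖ * ‖u‖) ^ 2 := by nlinarith
    have h4 : (‖ξ‖ * ‖u‖) ^ 2 ≤ max (‖u‖ ^ 2) 1 * ‖ξ‖ ^ 2 := by
      have := le_max_left (‖u‖ ^ 2) 1
      nlinarith [sq_nonneg ‖ξ‖]
    linarith
  · rw [trunc, if_neg hξ, inner_zero_left, add_zero]
    push_neg at hξ
    have h1 : Real.exp (-⟪ξ, u⟫) ≤ 1 := Real.exp_le_one_iff.mpr (by linarith)
    have h2 : 0 < Real.exp (-⟪ξ, u⟫) := Real.exp_pos _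
    have h3 : (1:ℝ) ≤ ‖ξ‖ ^ 2 := by nlinarith
    have h4 : (1:ℝ) ≤ max (‖u‖ ^ 2) 1 := le_max_right _ _
    rw [abs_le]
    constructor <;> nlinarith

lemma G_lip {ξ u v : H} (hu : 0 ≤ ⟪ξ, u⟫) (hv : 0 ≤ ⟪ξ, v⟫) :
    |(Real.exp (-⟪ξ, u⟫) - 1 + ⟪trunc ξ, u⟫) - (Real.exp (-⟪ξ, v⟫) - 1 + ⟪trunc ξ, v⟫)|
      ≤ (1 + 2 * (‖u‖ + ‖v‖)) * ‖u - v‖ * ‖ξ‖ ^ 2 := by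
  have hab : |⟪ξ, u⟫ - ⟪ξ, v⟫| ≤ ‖ξ‖ * ‖u - v‖ := by
    rw [← inner_sub_right]
    exact abs_real_inner_le_norm ξ (u - v)
  by_cases hξ : ‖ξ‖ ≤ 1
  · rw [trunc, if_pos hξ]
    have key := abs_flip hu hv
    have hsum : ⟪ξ, u⟫ + ⟪ξ, v⟫ ≤ ‖ξ‖ * (‖u‖ + ‖v‖) := by
      have := real_inner_le_norm ξ u
      have := real_inner_le_norm ξ v
      nlinarith
    calc |(Real.exp (-⟪ξ, u⟫) - 1 + ⟪ξ, u⟫) - (Real.exp (-⟪ξ, v⟫) - 1 + ⟪ξ, v⟫)|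
        ≤ 2 * |⟪ξ, u⟫ - ⟪ξ, v⟫| * (⟪ξ, u⟫ + ⟪ξ, v⟫) := key
      _ ≤ (1 + 2 * (‖u‖ + ‖v‖)) * ‖u - v‖ * ‖ξ‖ ^ 2 := by
          nlinarith [abs_nonneg (⟪ξ, u⟫ - ⟪ξ, v⟫), norm_nonneg ξ, norm_nonneg (u - v),
            norm_nonneg u, norm_nonneg v,
            mul_le_mul hab hsum (by positivity) (by positivity)]
  · rw [trunc, if_neg hξ, inner_zero_left, inner_zero_left, add_zero, add_zero]
    push_neg at hξ
    have key := abs_exp_exp hu hv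
    have hx2 : ‖ξ‖ ≤ ‖ξ‖ ^ 2 := by nlinarith
    calc |Real.exp (-⟪ξ, u⟫) - 1 - (Real.exp (-⟪ξ, v⟫) - 1)|
        = |Real.exp (-⟪ξ, u⟫) - Real.exp (-⟪ξ, v⟫)| := by ring_nf
      _ ≤ |⟪ξ, u⟫ - ⟪ξ, v⟫| := key
      _ ≤ ‖ξ‖ * ‖u - v‖ := hab
      _ ≤ ‖ξ‖ ^ 2 * ‖u - v‖ := mul_le_mul_of_nonneg_right hx2 (norm_nonneg _)
      _ ≤ (1 + 2 * (‖u‖ + ‖v‖)) * ‖u - v‖ * ‖ξ‖ ^ 2 := by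
          nlinarith [mul_nonneg (mul_nonneg (add_nonneg (norm_nonneg u) (norm_nonneg v))
            (norm_nonneg (u - v))) (sq_nonneg ‖ξ‖)]

lemma trunc_measurable [MeasurableSpace H] [BorelSpace H] : Measurable (trunc : H → H) :=
  Measurable.ite (measurableSet_le measurable_norm measurable_const)
    measurable_id measurable_const

lemma G_measurable [MeasurableSpace H] [BorelSpace H] (u : H) :
    Measurable (fun ξ : H => Real.exp (-⟪ξ, u⟫) - 1 + ⟪trunc ξ, u⟫) := by
  have m1 : Measurable fun ξ : H => ⟪ξ, u⟫ :=
    (Continuous.inner continuous_id continuous_const).measurable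
  have m2 : Measurable fun ξ : H => ⟪trunc ξ, u⟫ := m1.comp trunc_measurable
  exact ((Real.measurable_exp.comp m1.neg).sub measurable_const).add m2

lemma Gdiv_measurable [MeasurableSpace H] [BorelSpace H] (u : H) :
    Measurable (fun ξ : H => (Real.exp (-⟪ξ, u⟫) - 1 + ⟪trunc ξ, u⟫) / ‖ξ‖ ^ 2) :=
  (G_measurable u).div (measurable_norm.pow_const 2)

end Pointwise


/-- For an admissible parameter set `(b, B, m, μ)`, the functions
`F : K → ℝ` and `R : K → H` are continuous on `K` with respect to the norm topology. -/
theorem stmt_0 {H : Type*} [NormedAddCommGroup H] [InnerProductSpace ℝ H] [CompleteSpace H]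
    [MeasurableSpace H] [BorelSpace H] (K : Set H)
    (hK : IsSelfDualCone K) (hKgen : ∀ z : H, ∃ x ∈ K, ∃ y ∈ K, z = x - y)
    (p : AdmissibleParams H K) (R : H → H)
    (hR : ∀ u ∈ K, ∀ x ∈ K, ⟪R u, x⟫ =
      ⟪ContinuousLinearMap.adjoint p.B u, x⟫
        - ∫ ξ in K \ {0}, (Real.exp (-⟪ξ, u⟫) - 1 + ⟪trunc ξ, u⟫) / ‖ξ‖ ^ 2 ∂(p.ν x)) :
    ContinuousOn (fun u : H => ⟪p.b, u⟫ -
      ∫ ξ in K \ {0}, (Real.exp (-⟪ξ, u⟫) - 1 + ⟪trunc ξ, u⟫) ∂p.m) K ∧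
    ContinuousOn R K := by
  classical
  set S : Set H := K \ {0} with hSdef
  have hSmeas : MeasurableSet S := (sdc_closed hK).measurableSet.diff (measurableSet_singleton 0)
  set G : H → H → ℝ := fun u ξ => Real.exp (-⟪ξ, u⟫) - 1 + ⟪trunc ξ, u⟫ with hGdef
  have hpt : ∀ u ∈ K, ∀ ξ ∈ S, 0 ≤ ⟪ξ, u⟫ := fun u hu ξ hξ => sdc_inner_nonneg hK hξ.1 hu
  -- integrability of G u w.r.t. m on S
  have hGint : ∀ u ∈ K, IntegrableOn (G u) S p.m := by
    intro u hu
    refine Integrable.mono' (p.m_sq.const_mul (max (‖u‖ ^ 2) 1))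
      (G_measurable u).aestronglyMeasurable ?_
    refine (ae_restrict_iff' hSmeas).2 (ae_of_all _ fun ξ hξ => ?_)
    rw [Real.norm_eq_abs]
    exact G_bound (hpt u hu ξ hξ)
  set Cm : ℝ := ∫ ξ in S, ‖ξ‖ ^ 2 ∂p.m with hCm
  have hCm0 : 0 ≤ Cm := integral_nonneg fun ξ => sq_nonneg _
  -- Lipschitz estimate for the m-integral
  have hFdiff : ∀ u ∈ K, ∀ v ∈ K,
      |(∫ ξ in S, G u ξ ∂p.m) - ∫ ξ in S, G v ξ ∂p.m|
        ≤ (1 + 2 * (‖u‖ + ‖v‖)) * ‖u - v‖ * Cm := by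
    intro u hu v hv
    rw [← integral_sub (hGint u hu) (hGint v hv), ← Real.norm_eq_abs]
    calc ‖∫ ξ in S, (G u ξ - G v ξ) ∂p.m‖
        ≤ ∫ ξ in S, ‖G u ξ - G v ξ‖ ∂p.m := norm_integral_le_integral_norm _
      _ ≤ ∫ ξ in S, (1 + 2 * (‖u‖ + ‖v‖)) * ‖u - v‖ * ‖ξ‖ ^ 2 ∂p.m := by
          refine integral_mono_ae ((hGint u hu).sub (hGint v hv)).norm
            ((p.m_sq.const_mul _)) ?_
          refine (ae_restrict_iff' hSmeas).2 (ae_of_all _ fun ξ hξ => ?_)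
          show ‖G u ξ - G v ξ‖ ≤ (1 + 2 * (‖u‖ + ‖v‖)) * ‖u - v‖ * ‖ξ‖ ^ 2
          rw [Real.norm_eq_abs]
          exact G_lip (hpt u hu ξ hξ) (hpt v hv ξ hξ)
      _ = (1 + 2 * (‖u‖ + ‖v‖)) * ‖u - v‖ * Cm := by
          rw [← integral_const_mul]
  constructor
  · -- continuity of F
    intro u₀ hu₀
    apply ContinuousWithinAt.sub
    · exact (Continuous.inner continuous_const continuous_id).continuousWithinAt
    · show ContinuousWithinAt (fun u => ∫ ξ in S, G u ξ ∂p.m) K u₀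
      rw [ContinuousWithinAt, tendsto_iff_dist_tendsto_zero]
      have hb : ∀ᶠ u in 𝓝[K] u₀, dist (∫ ξ in S, G u ξ ∂p.m) (∫ ξ in S, G u₀ ξ ∂p.m)
          ≤ (1 + 2 * (2 * ‖u₀‖ + 1)) * Cm * dist u u₀ := by
        filter_upwards [eventually_mem_nhdsWithin,
          eventually_nhdsWithin_of_eventually_nhds
            (Metric.closedBall_mem_nhds u₀ one_pos : Metric.closedBall u₀ 1 ∈ 𝓝 u₀)]
          with u huK hub
        have hd1 : dist u u₀ ≤ 1 := Metric.mem_closedBall.1 hub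
        have hnu : ‖u‖ ≤ ‖u₀‖ + 1 := by
          have := norm_sub_norm_le u u₀
          rw [← dist_eq_norm] at this; linarith
        have key := hFdiff u huK u₀ hu₀
        rw [Real.dist_eq, dist_eq_norm]
        have hcoef : (1 + 2 * (‖u‖ + ‖u₀‖)) ≤ (1 + 2 * (2 * ‖u₀‖ + 1)) := by linarith
        calc |(∫ ξ in S, G u ξ ∂p.m) - ∫ ξ in S, G u₀ ξ ∂p.m|
            ≤ (1 + 2 * (‖u‖ + ‖u₀‖)) * ‖u - u₀‖ * Cm := key
          _ ≤ (1 + 2 * (2 * ‖u₀‖ + 1)) * Cm * ‖u - u₀‖ := by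
              nlinarith [mul_le_mul_of_nonneg_right hcoef
                (mul_nonneg (norm_nonneg (u - u₀)) hCm0)]
      refine squeeze_zero' (Eventually.of_forall fun u => dist_nonneg) hb ?_
      have : Tendsto (fun u : H => (1 + 2 * (2 * ‖u₀‖ + 1)) * Cm * dist u u₀) (𝓝 u₀)
          (𝓝 ((1 + 2 * (2 * ‖u₀‖ + 1)) * Cm * dist u₀ u₀)) :=
        (continuous_const.mul (continuous_id.dist continuous_const)).tendsto u₀
      rw [dist_self, mul_zero] at this
      exact this.mono_left nhdsWithin_le_nhds
  · -- continuity of R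
    intro u₀ hu₀
    set T := ContinuousLinearMap.adjoint p.B with hT
    set M : ℝ := ‖p.muVec S‖ with hM
    set C₀ : ℝ := ‖T‖ + (1 + 2 * (2 * ‖u₀‖ + 1)) * M with hC₀
    have hM0 : 0 ≤ M := norm_nonneg _
    have hC₀0 : 0 ≤ C₀ := by positivity
    -- key Lipschitz bound near u₀
    have key : ∀ u ∈ K, ‖u - u₀‖ ≤ 1 → ‖R u - R u₀‖ ≤ 2 * (C₀ * ‖u - u₀‖) := by
      intro u hu hd1
      have hnu : ‖u‖ ≤ ‖u₀‖ + 1 := by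
        have := norm_sub_norm_le u u₀; linarith
      refine sdc_norm_le_of_inner_le hK (by positivity) fun x hx => ?_
      haveI : IsFiniteMeasure (p.ν x) := p.ν_finite x hx
      -- integrability of the ν-integrands
      have hib : ∀ v ∈ K, IntegrableOn (fun ξ => G v ξ / ‖ξ‖ ^ 2) S (p.ν x) := by
        intro v hv
        refine Integrable.mono' (integrable_const (max (‖v‖ ^ 2) 1))
          (Gdiv_measurable v).aestronglyMeasurable ?_
        refine (ae_restrict_iff' hSmeas).2 (ae_of_all _ fun ξ hξ => ?_)
        have hξ0 : (0:ℝ) < ‖ξ‖ := norm_pos_iff.2 hξ.2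
        rw [Real.norm_eq_abs, abs_div, abs_of_nonneg (sq_nonneg ‖ξ‖ : (0:ℝ) ≤ ‖ξ‖ ^ 2),
          div_le_iff₀ (by positivity)]
        exact G_bound (hpt v hv ξ hξ)
      have heq : ⟪R u - R u₀, x⟫ = ⟪T (u - u₀), x⟫
          - ∫ ξ in S, (G u ξ - G u₀ ξ) / ‖ξ‖ ^ 2 ∂(p.ν x) := by
        rw [inner_sub_left, hR u hu x hx, hR u₀ hu₀ x hx]
        rw [map_sub, inner_sub_left]
        have : ∫ ξ in S, (G u ξ - G u₀ ξ) / ‖ξ‖ ^ 2 ∂(p.ν x)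
            = (∫ ξ in S, G u ξ / ‖ξ‖ ^ 2 ∂(p.ν x)) - ∫ ξ in S, G u₀ ξ / ‖ξ‖ ^ 2 ∂(p.ν x) := by
          rw [← integral_sub (hib u hu) (hib u₀ hu₀)]
          congr 1; funext ξ; rw [sub_div]
        rw [this]; ring
      have hB : |⟪T (u - u₀), x⟫| ≤ ‖T‖ * ‖u - u₀‖ * ‖x‖ := by
        calc |⟪T (u - u₀), x⟫| ≤ ‖T (u - u₀)‖ * ‖x‖ := abs_real_inner_le_norm _ _
          _ ≤ ‖T‖ * ‖u - u₀‖ * ‖x‖ :=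
            mul_le_mul_of_nonneg_right (T.le_opNorm _) (norm_nonneg _)
      have hI : |∫ ξ in S, (G u ξ - G u₀ ξ) / ‖ξ‖ ^ 2 ∂(p.ν x)|
          ≤ (1 + 2 * (2 * ‖u₀‖ + 1)) * ‖u - u₀‖ * (M * ‖x‖) := by
        have hbdd : ‖∫ ξ in S, (G u ξ - G u₀ ξ) / ‖ξ‖ ^ 2 ∂(p.ν x)‖
            ≤ ((1 + 2 * (2 * ‖u₀‖ + 1)) * ‖u - u₀‖) * ((p.ν x).restrict S Set.univ).toReal := by
          refine norm_integral_le_of_norm_le_const ?_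
          refine (ae_restrict_iff' hSmeas).2 (ae_of_all _ fun ξ hξ => ?_)
          have hξ0 : (0:ℝ) < ‖ξ‖ := norm_pos_iff.2 hξ.2
          rw [Real.norm_eq_abs, abs_div, abs_of_nonneg (sq_nonneg ‖ξ‖ : (0:ℝ) ≤ ‖ξ‖ ^ 2),
            div_le_iff₀ (by positivity)]
          calc |G u ξ - G u₀ ξ| ≤ (1 + 2 * (‖u‖ + ‖u₀‖)) * ‖u - u₀‖ * ‖ξ‖ ^ 2 :=
                G_lip (hpt u hu ξ hξ) (hpt u₀ hu₀ ξ hξ)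
            _ ≤ (1 + 2 * (2 * ‖u₀‖ + 1)) * ‖u - u₀‖ * ‖ξ‖ ^ 2 := by
                nlinarith [norm_nonneg (u - u₀), sq_nonneg ‖ξ‖,
                  mul_nonneg (norm_nonneg (u - u₀)) (sq_nonneg ‖ξ‖)]
        rw [Measure.restrict_apply_univ] at hbdd
        have hmass : ((p.ν x) S).toReal ≤ M * ‖x‖ := by
          rw [← p.muVec_spec S hSmeas x hx]
          exact real_inner_le_norm _ _
        rw [Real.norm_eq_abs] at hbdd
        calc |∫ ξ in S, (G u ξ - G u₀ ξ) / ‖ξ‖ ^ 2 ∂(p.ν x)|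
            ≤ ((1 + 2 * (2 * ‖u₀‖ + 1)) * ‖u - u₀‖) * ((p.ν x) S).toReal := hbdd
          _ ≤ (1 + 2 * (2 * ‖u₀‖ + 1)) * ‖u - u₀‖ * (M * ‖x‖) := by
              refine mul_le_mul_of_nonneg_left hmass (by positivity)
      calc |⟪R u - R u₀, x⟫| ≤ |⟪T (u - u₀), x⟫|
            + |∫ ξ in S, (G u ξ - G u₀ ξ) / ‖ξ‖ ^ 2 ∂(p.ν x)| := by
            rw [heq]; exact abs_sub _ _
        _ ≤ ‖T‖ * ‖u - u₀‖ * ‖x‖ + (1 + 2 * (2 * ‖u₀‖ + 1)) * ‖u - u₀‖ * (M * ‖x‖) := by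
            linarith
        _ = C₀ * ‖u - u₀‖ * ‖x‖ := by rw [hC₀]; ring
    -- squeeze
    rw [ContinuousWithinAt, tendsto_iff_dist_tendsto_zero]
    have hb : ∀ᶠ u in 𝓝[K] u₀, dist (R u) (R u₀) ≤ 2 * C₀ * dist u u₀ := by
      filter_upwards [eventually_mem_nhdsWithin,
        eventually_nhdsWithin_of_eventually_nhds
          (Metric.closedBall_mem_nhds u₀ one_pos : Metric.closedBall u₀ 1 ∈ 𝓝 u₀)]
        with u huK hub
      have hd1 : dist u u₀ ≤ 1 := Metric.mem_closedBall.1 hub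
      rw [dist_eq_norm] at hd1 ⊢
      rw [dist_eq_norm]
      calc ‖R u - R u₀‖ ≤ 2 * (C₀ * ‖u - u₀‖) := key u huK hd1
        _ = 2 * C₀ * ‖u - u₀‖ := by ring
    refine squeeze_zero' (Eventually.of_forall fun u => dist_nonneg) hb ?_
    have : Tendsto (fun u : H => 2 * C₀ * dist u u₀) (𝓝 u₀) (𝓝 (2 * C₀ * dist u₀ u₀)) :=
      (continuous_const.mul (continuous_id.dist continuous_const)).tendsto u₀
    rw [dist_self, mul_zero] at this
    exact this.mono_left nhdsWithin_le_nhds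
end
end

section
/- Let (b, B, m, μ) be an admissible parameter set. Then for every u ∈ K: (a) |F(u)| ≤ (‖b‖ + ∫ ‖ξ‖² m(dξ)) (1 + ‖u‖²); and (b) there exists a unique element R(u) ∈ H with ⟨R(u),x⟩ = ⟨B*(u),x⟩ − ∫ (e^{−⟨ξ,u⟩} − 1 + ⟨χ(ξ),u⟩) ‖ξ‖^{−2} ν_x(dξ) for all x ∈ K, and it satisfies ‖R(u)‖ ≤ (‖B*‖_{L(H)} + ‖μ(K∖{0})‖) (1 + ‖u‖²). -/
/-!
For `ξ, u ∈ K` we have `⟨ξ, u⟩ ≥ 0`, so `0 ≤ e^{-⟨ξ,u⟩} - 1 + ⟨ξ, u⟩ ≤ ⟨ξ, u⟩²` and the integrand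
`e^{-⟨ξ,u⟩} - 1 + ⟨χ(ξ), u⟩` is bounded by `‖ξ‖² (1 + ‖u‖²)`. This gives (a), and bounds the
integral term of `⟨R(u), x⟩` by `(1 + ‖u‖²) ⟨μ(K∖{0}), x⟩`.

The right-hand side of the identity defining `R(u)` is additive and positively homogeneous in
`x ∈ K`. Since `K` is self-dual, every `z ∈ H` has a Moreau decomposition `z = x - y` with
`x, y ∈ K` and `⟨x, y⟩ = 0`, so `‖x‖, ‖y‖ ≤ ‖z‖`; hence that right-hand side extends to a
bounded linear functional on `H`, and `R(u)` is its Riesz representative. Writing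
`R(u) = x - y` in the same way, `‖R(u)‖² = ⟨R(u), x⟩ - ⟨R(u), y⟩` and `‖x + y‖ = ‖R(u)‖`
give the norm bound.
-/

open MeasureTheory Filter
open scoped RealInnerProductSpace Topology ENNReal

noncomputable section

namespace IsSelfDualCone

variable {H : Type*} [NormedAddCommGroup H] [InnerProductSpace ℝ H] {K : Set H}

lemma inner_nonneg (hK : IsSelfDualCone K) {x y : H} (hx : x ∈ K) (hy : y ∈ K) :
    0 ≤ ⟪x, y⟫ :=
  hK.le hx y hy

lemma mem_of_forall_inner_nonneg (hK : IsSelfDualCone K) {x : H}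
    (h : ∀ y ∈ K, 0 ≤ ⟪x, y⟫) : x ∈ K :=
  hK.ge h

lemma zero_mem (hK : IsSelfDualCone K) : (0 : H) ∈ K :=
  hK.mem_of_forall_inner_nonneg fun y _ => by simp

lemma add_mem (hK : IsSelfDualCone K) {x y : H} (hx : x ∈ K) (hy : y ∈ K) : x + y ∈ K :=
  hK.mem_of_forall_inner_nonneg fun z hz => by
    rw [inner_add_left]
    exact add_nonneg (hK.inner_nonneg hx hz) (hK.inner_nonneg hy hz)

lemma smul_mem (hK : IsSelfDualCone K) {c : ℝ} (hc : 0 ≤ c) {x : H} (hx : x ∈ K) :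
    c • x ∈ K :=
  hK.mem_of_forall_inner_nonneg fun z hz => by
    rw [real_inner_smul_left]
    exact mul_nonneg hc (hK.inner_nonneg hx hz)

lemma convex (hK : IsSelfDualCone K) : Convex ℝ K :=
  fun _ hx _ hy _ _ ha hb _ => hK.add_mem (hK.smul_mem ha hx) (hK.smul_mem hb hy)

lemma isClosed (hK : IsSelfDualCone K) : IsClosed K := by
  rw [hK]
  simp only [Set.ofPred_forall]
  exact isClosed_iInter fun y => isClosed_iInter fun _ =>
    isClosed_le continuous_const (continuous_id.inner continuous_const)

lemma measurableSet_diff_zero [MeasurableSpace H] [BorelSpace H] (hK : IsSelfDualCone K) :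
    MeasurableSet (K \ {0}) :=
  hK.isClosed.measurableSet.diff (measurableSet_singleton 0)

/-- Moreau decomposition: `x` is the metric projection of `z` onto `K`. -/
theorem exists_sub_eq_of_inner_eq_zero [CompleteSpace H] (hK : IsSelfDualCone K) (z : H) :
    ∃ x ∈ K, ∃ y ∈ K, z = x - y ∧ ⟪x, y⟫ = 0 := by
  obtain ⟨x, hx, hmin⟩ := exists_norm_eq_iInf_of_complete_convex ⟨0, hK.zero_mem⟩
    hK.isClosed.isComplete hK.convex z
  have hvar : ∀ w ∈ K, ⟪z - x, w - x⟫ ≤ 0 :=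
    (norm_eq_iInf_iff_real_inner_le_zero hK.convex hx).1 hmin
  -- testing `w = 0` and `w = 2 • x` shows that `z - x ⊥ x`
  have horth : ⟪z - x, x⟫ = 0 := by
    have h0 := hvar 0 hK.zero_mem
    have h2 := hvar ((2 : ℝ) • x) (hK.smul_mem zero_le_two hx)
    rw [zero_sub, inner_neg_right] at h0
    rw [show (2 : ℝ) • x - x = x by module] at h2
    linarith
  refine ⟨x, hx, x - z, hK.mem_of_forall_inner_nonneg fun w hw => ?_, (sub_sub_cancel x z).symm, ?_⟩
  · have := hvar w hw
    rw [inner_sub_right, horth, sub_zero] at this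
    rw [← neg_sub, inner_neg_left]
    linarith
  · rw [real_inner_comm, ← neg_sub, inner_neg_left, horth, neg_zero]

end IsSelfDualCone

section OrthogonalDecomposition

variable {H : Type*} [NormedAddCommGroup H] [InnerProductSpace ℝ H]

lemma norm_add_eq_norm_sub_of_inner_eq_zero {x y : H} (h : ⟪x, y⟫ = 0) : ‖x + y‖ = ‖x - y‖ := by
  have := (norm_add_sq_eq_norm_sq_add_norm_sq_real h).trans
    (norm_sub_sq_eq_norm_sq_add_norm_sq_real h).symm
  exact (mul_self_inj (norm_nonneg _) (norm_nonneg _)).1 this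

lemma norm_le_norm_sub_of_inner_eq_zero {x y : H} (h : ⟪x, y⟫ = 0) :
    ‖x‖ ≤ ‖x - y‖ ∧ ‖y‖ ≤ ‖x - y‖ := by
  have hpyth := norm_sub_sq_eq_norm_sq_add_norm_sq_real h
  constructor <;> refine (mul_self_le_mul_self_iff (norm_nonneg _) (norm_nonneg _)).2 ?_ <;>
    nlinarith [mul_self_nonneg ‖x‖, mul_self_nonneg ‖y‖]

end OrthogonalDecomposition

namespace IsSelfDualCone

variable {H : Type*} [NormedAddCommGroup H] [InnerProductSpace ℝ H] [CompleteSpace H]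
  {K : Set H}

lemma eq_of_forall_inner_eq (hK : IsSelfDualCone K) {R R' : H}
    (h : ∀ x ∈ K, ⟪R, x⟫ = ⟪R', x⟫) : R = R' := by
  refine ext_inner_right ℝ fun z => ?_
  obtain ⟨x, hx, y, hy, rfl, -⟩ := hK.exists_sub_eq_of_inner_eq_zero z
  rw [inner_sub_right, inner_sub_right, h x hx, h y hy]

lemma exists_linearMap_eq_sub (hK : IsSelfDualCone K) {φ : H → ℝ}
    (hadd : ∀ x ∈ K, ∀ y ∈ K, φ (x + y) = φ x + φ y)
    (hsmul : ∀ x ∈ K, ∀ c : ℝ, 0 ≤ c → φ (c • x) = c * φ x) :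
    ∃ L : H →ₗ[ℝ] ℝ, ∀ z, ∀ x ∈ K, ∀ y ∈ K, z = x - y → L z = φ x - φ y := by
  have hgen : ∀ z : H, ∃ x ∈ K, ∃ y ∈ K, z = x - y := fun z =>
    let ⟨x, hx, y, hy, hz, _⟩ := hK.exists_sub_eq_of_inner_eq_zero z
    ⟨x, hx, y, hy, hz⟩
  choose pos hpos neg hneg hsub using hgen
  set ψ : H → ℝ := fun z => φ (pos z) - φ (neg z)
  have hψ : ∀ z, ∀ x ∈ K, ∀ y ∈ K, z = x - y → ψ z = φ x - φ y := by
    intro z x hx y hy hz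
    have hsum : pos z + y = x + neg z := by
      rw [← sub_eq_sub_iff_add_eq_add, ← hsub, hz]
    have := congrArg φ hsum
    rw [hadd _ (hpos z) _ hy, hadd _ hx _ (hneg z)] at this
    simp only [ψ]
    linarith
  refine ⟨{ toFun := ψ, map_add' := fun z w => ?_, map_smul' := fun c z => ?_ }, hψ⟩
  · rw [hψ (z + w) _ (hK.add_mem (hpos z) (hpos w)) _ (hK.add_mem (hneg z) (hneg w))
      (by rw [add_sub_add_comm, ← hsub z, ← hsub w]), hadd _ (hpos z) _ (hpos w),
      hadd _ (hneg z) _ (hneg w)]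
    simp only [ψ]
    ring
  · rcases le_total 0 c with hc | hc
    · rw [RingHom.id_apply, smul_eq_mul, hψ (c • z) _ (hK.smul_mem hc (hpos z))
        _ (hK.smul_mem hc (hneg z)) (by rw [← smul_sub, ← hsub]),
        hsmul _ (hpos z) c hc, hsmul _ (hneg z) c hc, mul_sub]
    · have hc' : 0 ≤ -c := neg_nonneg.2 hc
      rw [RingHom.id_apply, smul_eq_mul, hψ (c • z) _ (hK.smul_mem hc' (hneg z))
        _ (hK.smul_mem hc' (hpos z)) (by rw [neg_smul, neg_smul, neg_sub_neg, ← smul_sub, ← hsub]),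
        hsmul _ (hneg z) _ hc', hsmul _ (hpos z) _ hc']
      simp only [ψ]
      ring

lemma exists_inner_eq_of_additive (hK : IsSelfDualCone K) {φ : H → ℝ}
    (hadd : ∀ x ∈ K, ∀ y ∈ K, φ (x + y) = φ x + φ y)
    (hsmul : ∀ x ∈ K, ∀ c : ℝ, 0 ≤ c → φ (c • x) = c * φ x)
    {C : ℝ} (hC : 0 ≤ C) (hbound : ∀ x ∈ K, |φ x| ≤ C * ‖x‖) :
    ∃ R : H, ∀ x ∈ K, ⟪R, x⟫ = φ x := by
  obtain ⟨L, hL⟩ := hK.exists_linearMap_eq_sub hadd hsmul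
  have hL_bound : ∀ z, ‖L z‖ ≤ 2 * C * ‖z‖ := by
    intro z
    obtain ⟨x, hx, y, hy, rfl, hxy⟩ := hK.exists_sub_eq_of_inner_eq_zero z
    obtain ⟨hxz, hyz⟩ := norm_le_norm_sub_of_inner_eq_zero hxy
    rw [Real.norm_eq_abs, hL _ x hx y hy rfl]
    calc |φ x - φ y| ≤ |φ x| + |φ y| := abs_sub _ _
      _ ≤ C * ‖x‖ + C * ‖y‖ := add_le_add (hbound x hx) (hbound y hy)
      _ ≤ 2 * C * ‖x - y‖ := by nlinarith
  have hφ0 : φ 0 = 0 := by simpa using hsmul 0 hK.zero_mem 0 le_rfl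
  refine ⟨(InnerProductSpace.toDual ℝ H).symm (L.mkContinuous _ hL_bound), fun x hx => ?_⟩
  rw [InnerProductSpace.toDual_symm_apply, LinearMap.mkContinuous_apply,
    hL x x hx 0 hK.zero_mem (sub_zero x).symm, hφ0, sub_zero]

lemma norm_le_of_abs_inner_sub_le (hK : IsSelfDualCone K) {R v w : H}
    (h : ∀ x ∈ K, |⟪R - v, x⟫| ≤ ⟪w, x⟫) : ‖R‖ ≤ ‖v‖ + ‖w‖ := by
  obtain ⟨x, hx, y, hy, rfl, hxy⟩ := hK.exists_sub_eq_of_inner_eq_zero R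
  have hsq : ‖x - y‖ ^ 2 ≤ (‖v‖ + ‖w‖) * ‖x - y‖ := calc
    ‖x - y‖ ^ 2 = ⟪v, x - y⟫ + (⟪x - y - v, x⟫ - ⟪x - y - v, y⟫) := by
      rw [← real_inner_self_eq_norm_sq]
      simp only [inner_sub_left, inner_sub_right]
      ring
    _ ≤ ⟪v, x - y⟫ + (⟪w, x⟫ + ⟪w, y⟫) := by
      have := abs_le.1 (h x hx)
      have := abs_le.1 (h y hy)
      linarith
    _ = ⟪v, x - y⟫ + ⟪w, x + y⟫ := by rw [inner_add_right]
    _ ≤ ‖v‖ * ‖x - y‖ + ‖w‖ * ‖x + y‖ :=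
      add_le_add (real_inner_le_norm _ _) (real_inner_le_norm _ _)
    _ = (‖v‖ + ‖w‖) * ‖x - y‖ := by
      rw [norm_add_eq_norm_sub_of_inner_eq_zero hxy]
      ring
  nlinarith [norm_nonneg v, norm_nonneg w, norm_nonneg (x - y)]

end IsSelfDualCone

lemma Real.abs_exp_neg_sub_one_add_le_sq {t : ℝ} (ht : 0 ≤ t) :
    |Real.exp (-t) - 1 + t| ≤ t ^ 2 := by
  rcases le_total t 1 with h1 | h1
  · simpa [sub_neg_eq_add] using
      Real.abs_exp_sub_one_sub_id_le (x := -t) (by rwa [abs_neg, abs_of_nonneg ht])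
  · have hexp : Real.exp (-t) ≤ 1 := Real.exp_le_one_iff.2 (by linarith)
    rw [abs_of_nonneg (by linarith [Real.add_one_le_exp (-t)])]
    nlinarith

section CompensatedExp

variable {H : Type*} [NormedAddCommGroup H] [InnerProductSpace ℝ H]

def compensatedExp (u ξ : H) : ℝ :=
  Real.exp (-⟪ξ, u⟫) - 1 + ⟪trunc ξ, u⟫

lemma abs_compensatedExp_le {u ξ : H} (h : 0 ≤ ⟪ξ, u⟫) :
    |compensatedExp u ξ| ≤ ‖ξ‖ ^ 2 * (1 + ‖u‖ ^ 2) := by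
  have hcs : ⟪ξ, u⟫ ≤ ‖ξ‖ * ‖u‖ := real_inner_le_norm ξ u
  unfold compensatedExp trunc
  split_ifs with hξ
  · calc |Real.exp (-⟪ξ, u⟫) - 1 + ⟪ξ, u⟫| ≤ ⟪ξ, u⟫ ^ 2 := Real.abs_exp_neg_sub_one_add_le_sq h
      _ ≤ (‖ξ‖ * ‖u‖) ^ 2 := pow_le_pow_left₀ h hcs 2
      _ ≤ ‖ξ‖ ^ 2 * (1 + ‖u‖ ^ 2) := by nlinarith [sq_nonneg ‖ξ‖]
  · have hexp : Real.exp (-⟪ξ, u⟫) ≤ 1 := Real.exp_le_one_iff.2 (neg_nonpos.2 h)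
    rw [inner_zero_left, add_zero, abs_of_nonpos (by linarith), neg_sub]
    nlinarith [Real.exp_pos (-⟪ξ, u⟫), sq_nonneg ‖u‖, sq_nonneg ‖ξ‖]

lemma abs_compensatedExp_div_le {u ξ : H} (h : 0 ≤ ⟪ξ, u⟫) (hξ : ξ ≠ 0) :
    |compensatedExp u ξ / ‖ξ‖ ^ 2| ≤ 1 + ‖u‖ ^ 2 := by
  rw [abs_div, abs_of_nonneg (sq_nonneg ‖ξ‖), div_le_iff₀ (pow_pos (norm_pos_iff.2 hξ) 2), mul_comm]
  exact abs_compensatedExp_le h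

variable [MeasurableSpace H] [BorelSpace H]

@[fun_prop]
lemma measurable_trunc : Measurable (trunc : H → H) :=
  Measurable.ite (measurableSet_le measurable_norm measurable_const) measurable_id measurable_const

@[fun_prop]
lemma measurable_compensatedExp (u : H) : Measurable (compensatedExp u) := by
  unfold compensatedExp
  fun_prop

lemma ae_abs_compensatedExp_div_le (hK : IsSelfDualCone K) {u : H} (hu : u ∈ K)
    (μ : Measure H) :
    ∀ᵐ ξ ∂μ.restrict (K \ {0}), ‖compensatedExp u ξ / ‖ξ‖ ^ 2‖ ≤ 1 + ‖u‖ ^ 2 := by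
  filter_upwards [ae_restrict_mem hK.measurableSet_diff_zero] with ξ hξ
    using abs_compensatedExp_div_le (hK.inner_nonneg hξ.1 hu) hξ.2

end CompensatedExp

lemma Real.le_one_add_sq (t : ℝ) : t ≤ 1 + t ^ 2 := by
  nlinarith [sq_nonneg (t - 1)]

namespace AdmissibleParams

variable {H : Type*} [NormedAddCommGroup H] [InnerProductSpace ℝ H] [CompleteSpace H]
  [MeasurableSpace H] [BorelSpace H] {K : Set H} (p : AdmissibleParams H K)

def F (u : H) : ℝ :=
  ⟪p.b, u⟫ - ∫ ξ in K \ {0}, compensatedExp u ξ ∂p.m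

def jumpIntegral (u x : H) : ℝ :=
  ∫ ξ in K \ {0}, compensatedExp u ξ / ‖ξ‖ ^ 2 ∂(p.ν x)

variable {p}

lemma abs_F_le (hK : IsSelfDualCone K) {u : H} (hu : u ∈ K) :
    |p.F u| ≤ (‖p.b‖ + ∫ ξ in K \ {0}, ‖ξ‖ ^ 2 ∂p.m) * (1 + ‖u‖ ^ 2) := by
  have hint : ‖∫ ξ in K \ {0}, compensatedExp u ξ ∂p.m‖
      ≤ ∫ ξ in K \ {0}, ‖ξ‖ ^ 2 * (1 + ‖u‖ ^ 2) ∂p.m :=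
    norm_integral_le_of_norm_le (p.m_sq.mul_const _) <| by
      filter_upwards [ae_restrict_mem hK.measurableSet_diff_zero] with ξ hξ
        using abs_compensatedExp_le (hK.inner_nonneg hξ.1 hu)
  have hb : |⟪p.b, u⟫| ≤ ‖p.b‖ * (1 + ‖u‖ ^ 2) :=
    (abs_real_inner_le_norm _ _).trans
      (mul_le_mul_of_nonneg_left (Real.le_one_add_sq _) (norm_nonneg _))
  rw [integral_mul_const, Real.norm_eq_abs] at hint
  rw [add_mul]
  exact (abs_sub _ _).trans (add_le_add hb hint)

lemma integrableOn_compensatedExp_div (hK : IsSelfDualCone K) {u x : H} (hu : u ∈ K)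
    (hx : x ∈ K) :
    IntegrableOn (fun ξ => compensatedExp u ξ / ‖ξ‖ ^ 2) (K \ {0}) (p.ν x) :=
  have := p.ν_finite x hx
  Integrable.of_bound
    ((measurable_compensatedExp u).div (measurable_norm.pow_const 2)).aestronglyMeasurable _
    (ae_abs_compensatedExp_div_le hK hu _)

lemma jumpIntegral_add (hK : IsSelfDualCone K) {u x y : H} (hu : u ∈ K) (hx : x ∈ K)
    (hy : y ∈ K) : p.jumpIntegral u (x + y) = p.jumpIntegral u x + p.jumpIntegral u y := by
  rw [jumpIntegral, p.ν_add x hx y hy, Measure.restrict_add,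
    integral_add_measure (integrableOn_compensatedExp_div hK hu hx)
      (integrableOn_compensatedExp_div hK hu hy)]
  rfl

lemma jumpIntegral_smul {u x : H} (hx : x ∈ K) {c : ℝ} (hc : 0 ≤ c) :
    p.jumpIntegral u (c • x) = c * p.jumpIntegral u x := by
  rw [jumpIntegral, p.ν_smul x hx c hc, Measure.restrict_smul, integral_smul_measure,
    ENNReal.toReal_ofReal hc, smul_eq_mul]
  rfl

lemma abs_jumpIntegral_le (hK : IsSelfDualCone K) {u x : H} (hu : u ∈ K) (hx : x ∈ K) :
    |p.jumpIntegral u x| ≤ ⟪(1 + ‖u‖ ^ 2) • p.muVec (K \ {0}), x⟫ := by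
  have := p.ν_finite x hx
  rw [real_inner_smul_left, p.muVec_spec _ hK.measurableSet_diff_zero x hx]
  exact norm_setIntegral_le_of_norm_le_const_ae (measure_lt_top _ _)
    (ae_abs_compensatedExp_div_le hK hu _)

lemma exists_inner_eq_sub_jumpIntegral (hK : IsSelfDualCone K) {u : H} (hu : u ∈ K) (v : H) :
    ∃ R : H, ∀ x ∈ K, ⟪R, x⟫ = ⟪v, x⟫ - p.jumpIntegral u x := by
  set w := (1 + ‖u‖ ^ 2) • p.muVec (K \ {0})
  refine hK.exists_inner_eq_of_additive
    (fun x hx y hy => by rw [inner_add_right, jumpIntegral_add hK hu hx hy]; ring)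
    (fun x hx c hc => by rw [real_inner_smul_right, jumpIntegral_smul hx hc]; ring)
    (add_nonneg (norm_nonneg v) (norm_nonneg w)) fun x hx => ?_
  calc |⟪v, x⟫ - p.jumpIntegral u x| ≤ |⟪v, x⟫| + |p.jumpIntegral u x| := abs_sub _ _
    _ ≤ ‖v‖ * ‖x‖ + ‖w‖ * ‖x‖ := add_le_add (abs_real_inner_le_norm _ _)
        ((abs_jumpIntegral_le hK hu hx).trans (real_inner_le_norm _ _))
    _ = (‖v‖ + ‖w‖) * ‖x‖ := by ring

lemma norm_le_of_inner_eq_sub_jumpIntegral (hK : IsSelfDualCone K) {u R v : H} (hu : u ∈ K)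
    (hR : ∀ x ∈ K, ⟪R, x⟫ = ⟪v, x⟫ - p.jumpIntegral u x) :
    ‖R‖ ≤ ‖v‖ + (1 + ‖u‖ ^ 2) * ‖p.muVec (K \ {0})‖ := by
  have := hK.norm_le_of_abs_inner_sub_le (v := v) (w := (1 + ‖u‖ ^ 2) • p.muVec (K \ {0}))
    fun x hx => by
      rw [inner_sub_left, hR x hx, sub_sub_cancel_left, abs_neg]
      exact abs_jumpIntegral_le hK hu hx
  rwa [norm_smul, Real.norm_of_nonneg (by positivity)] at this

end AdmissibleParams

theorem stmt_1_general {H : Type*} [NormedAddCommGroup H] [InnerProductSpace ℝ H] [CompleteSpace H]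
    [MeasurableSpace H] [BorelSpace H] (K : Set H)
    (hK : IsSelfDualCone K)
    (p : AdmissibleParams H K) (u : H) (hu : u ∈ K) :
    |⟪p.b, u⟫ - ∫ ξ in K \ {0}, (Real.exp (-⟪ξ, u⟫) - 1 + ⟪trunc ξ, u⟫) ∂p.m|
      ≤ (‖p.b‖ + ∫ ξ in K \ {0}, ‖ξ‖ ^ 2 ∂p.m) * (1 + ‖u‖ ^ 2) ∧
    (∃! Ru : H, ∀ x ∈ K, ⟪Ru, x⟫ = ⟪ContinuousLinearMap.adjoint p.B u, x⟫
        - ∫ ξ in K \ {0}, (Real.exp (-⟪ξ, u⟫) - 1 + ⟪trunc ξ, u⟫) / ‖ξ‖ ^ 2 ∂(p.ν x)) ∧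
    (∀ Ru : H, (∀ x ∈ K, ⟪Ru, x⟫ = ⟪ContinuousLinearMap.adjoint p.B u, x⟫
        - ∫ ξ in K \ {0}, (Real.exp (-⟪ξ, u⟫) - 1 + ⟪trunc ξ, u⟫) / ‖ξ‖ ^ 2 ∂(p.ν x)) →
      ‖Ru‖ ≤ (‖ContinuousLinearMap.adjoint p.B‖ + ‖p.muVec (K \ {0})‖) * (1 + ‖u‖ ^ 2)) := by
  set Bstar := ContinuousLinearMap.adjoint p.B
  refine ⟨p.abs_F_le hK hu, ?_, fun R hR => ?_⟩
  · obtain ⟨R, hR⟩ := p.exists_inner_eq_sub_jumpIntegral hK hu (Bstar u)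
    exact ⟨R, hR, fun R' hR' =>
      hK.eq_of_forall_inner_eq fun x hx => (hR' x hx).trans (hR x hx).symm⟩
  · have hBu : ‖Bstar u‖ ≤ ‖Bstar‖ * (1 + ‖u‖ ^ 2) :=
      (Bstar.le_opNorm u).trans (mul_le_mul_of_nonneg_left (Real.le_one_add_sq _) (norm_nonneg _))
    calc ‖R‖ ≤ ‖Bstar u‖ + (1 + ‖u‖ ^ 2) * ‖p.muVec (K \ {0})‖ :=
          p.norm_le_of_inner_eq_sub_jumpIntegral hK hu hR
      _ ≤ (‖Bstar‖ + ‖p.muVec (K \ {0})‖) * (1 + ‖u‖ ^ 2) := by linarith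

/-- Quadratic growth bounds for `F` and `R`: for every `u ∈ K`,
`|F(u)| ≤ (‖b‖ + ∫‖ξ‖² m(dξ))(1 + ‖u‖²)`, there is a unique `R(u) ∈ H` with
`⟨R(u),x⟩ = ⟨B*(u),x⟩ − ∫ (e^{−⟨ξ,u⟩} − 1 + ⟨χ(ξ),u⟩)‖ξ‖⁻² ν_x(dξ)` for all `x ∈ K`,
and it satisfies `‖R(u)‖ ≤ (‖B*‖ + ‖μ(K∖{0})‖)(1 + ‖u‖²)`. -/
theorem stmt_1 {H : Type*} [NormedAddCommGroup H] [InnerProductSpace ℝ H] [CompleteSpace H]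
    [MeasurableSpace H] [BorelSpace H] (K : Set H)
    (hK : IsSelfDualCone K) (hKgen : ∀ z : H, ∃ x ∈ K, ∃ y ∈ K, z = x - y)
    (p : AdmissibleParams H K) (u : H) (hu : u ∈ K) :
    |⟪p.b, u⟫ - ∫ ξ in K \ {0}, (Real.exp (-⟪ξ, u⟫) - 1 + ⟪trunc ξ, u⟫) ∂p.m|
      ≤ (‖p.b‖ + ∫ ξ in K \ {0}, ‖ξ‖ ^ 2 ∂p.m) * (1 + ‖u‖ ^ 2) ∧
    (∃! Ru : H, ∀ x ∈ K, ⟪Ru, x⟫ = ⟪ContinuousLinearMap.adjoint p.B u, x⟫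
        - ∫ ξ in K \ {0}, (Real.exp (-⟪ξ, u⟫) - 1 + ⟪trunc ξ, u⟫) / ‖ξ‖ ^ 2 ∂(p.ν x)) ∧
    (∀ Ru : H, (∀ x ∈ K, ⟪Ru, x⟫ = ⟪ContinuousLinearMap.adjoint p.B u, x⟫
        - ∫ ξ in K \ {0}, (Real.exp (-⟪ξ, u⟫) - 1 + ⟪trunc ξ, u⟫) / ‖ξ‖ ^ 2 ∂(p.ν x)) →
      ‖Ru‖ ≤ (‖ContinuousLinearMap.adjoint p.B‖ + ‖p.muVec (K \ {0})‖) * (1 + ‖u‖ ^ 2)) :=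
  stmt_1_general K hK p u hu
end
end

section
/- Let (b, B, m, μ) be an admissible parameter set. Then for every k ∈ ℕ the function R^{(k)} : K → H is quasi-monotone with respect to K; that is, for all u, v ∈ K with u ≤_K v and all x ∈ K with ⟨v − u, x⟩ = 0 one has ⟨R^{(k)}(v) − R^{(k)}(u), x⟩ ≥ 0. -/
open MeasureTheory Filter
open scoped RealInnerProductSpace Topology ENNReal

noncomputable section

/-- For an admissible parameter set, each approximation `R^{(k)}` is
quasi-monotone with respect to `K`. -/
theorem stmt_3 {H : Type*} [NormedAddCommGroup H] [InnerProductSpace ℝ H] [CompleteSpace H]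
    [MeasurableSpace H] [BorelSpace H] (K : Set H)
    (hK : IsSelfDualCone K) (hKgen : ∀ z : H, ∃ x ∈ K, ∃ y ∈ K, z = x - y)
    (p : AdmissibleParams H K) (k : ℕ) (hk : 0 < k) (Rk : H → H)
    (hRk : ∀ u ∈ K, ∀ x ∈ K, ⟪Rk u, x⟫ =
      ⟪ContinuousLinearMap.adjoint p.B u, x⟫
        - ∫ ξ in (K \ {0}) ∩ {ξ : H | 1 / (k : ℝ) < ‖ξ‖},
            (Real.exp (-⟪ξ, u⟫) - 1 + ⟪trunc ξ, u⟫) / ‖ξ‖ ^ 2 ∂(p.ν x)) :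
    ∀ u ∈ K, ∀ v ∈ K, v - u ∈ K → ∀ x ∈ K, ⟪v - u, x⟫ = 0 →
      0 ≤ ⟪Rk v - Rk u, x⟫ := by
  intro u hu v hv hw x hx hwx
  haveI := p.ν_finite x hx
  -- basic positivity on K
  have hKpos : ∀ a ∈ K, ∀ b ∈ K, 0 ≤ ⟪a, b⟫ := by
    intro a ha b hb
    have : a ∈ {x : H | ∀ y ∈ K, 0 ≤ ⟪x, y⟫} := hK ▸ ha
    exact this b hb
  have hKclosed : IsClosed K := by
    rw [hK]
    have : {x : H | ∀ y ∈ K, 0 ≤ ⟪x, y⟫} = ⋂ y ∈ K, {x : H | 0 ≤ ⟪x, y⟫} := by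
      ext z; simp [Set.mem_iInter]
    rw [this]
    exact isClosed_biInter fun y _ =>
      isClosed_le continuous_const (Continuous.inner continuous_id continuous_const)
  set S : Set H := (K \ {0}) ∩ {ξ : H | 1 / (k : ℝ) < ‖ξ‖} with hSdef
  have hSmeas : MeasurableSet S :=
    ((hKclosed.measurableSet.diff (measurableSet_singleton 0))).inter
      (isOpen_lt continuous_const continuous_norm).measurableSet
  have hSsub : S ⊆ K \ {0} := Set.inter_subset_left
  -- measurability of the integrands
  have hmeas : ∀ z : H, Measurable fun ξ : H =>
      (Real.exp (-⟪ξ, z⟫) - 1 + ⟪trunc ξ, z⟫) / ‖ξ‖ ^ 2 := by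
    intro z
    have h1 : Measurable fun ξ : H => ⟪ξ, z⟫ :=
      (Continuous.inner continuous_id continuous_const).measurable
    have h2 : Measurable fun ξ : H => ⟪trunc ξ, z⟫ := by
      have : (fun ξ : H => ⟪trunc ξ, z⟫)
          = fun ξ : H => if ‖ξ‖ ≤ 1 then ⟪ξ, z⟫ else 0 := by
        funext ξ; simp [trunc, apply_ite (fun y : H => ⟪y, z⟫)]
      rw [this]
      exact Measurable.ite (measurableSet_le measurable_norm measurable_const)
        h1 measurable_const
    exact ((Real.measurable_exp.comp h1.neg).sub measurable_const |>.add h2).div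
      (measurable_norm.pow measurable_const)
  -- integrability of the truncated integrands on S
  have hint : ∀ z : H, z ∈ K → IntegrableOn
      (fun ξ : H => (Real.exp (-⟪ξ, z⟫) - 1 + ⟪trunc ξ, z⟫) / ‖ξ‖ ^ 2) S (p.ν x) := by
    intro z hz
    refine Integrable.mono' (integrable_const ((1 + ‖z‖) * (k : ℝ) ^ 2))
      (hmeas z).aestronglyMeasurable ?_
    filter_upwards [ae_restrict_mem hSmeas] with ξ hξ
    obtain ⟨⟨hξK, hξ0⟩, hξn⟩ := hξ
    have hξ0' : ξ ≠ 0 := hξ0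
    have hknorm : 1 / (k : ℝ) < ‖ξ‖ := hξn
    have hkpos : (0 : ℝ) < (k : ℝ) := by exact_mod_cast hk
    have hnormpos : 0 < ‖ξ‖ := lt_trans (by positivity) hknorm
    have hip : 0 ≤ ⟪ξ, z⟫ := hKpos ξ hξK z hz
    have hexp : |Real.exp (-⟪ξ, z⟫) - 1| ≤ 1 := by
      rw [abs_le]
      constructor
      · nlinarith [Real.exp_pos (-⟪ξ, z⟫)]
      · have := Real.exp_le_one_iff.mpr (neg_nonpos.mpr hip)
        linarith
    have htr : |⟪trunc ξ, z⟫| ≤ ‖z‖ := by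
      have := abs_real_inner_le_norm (trunc ξ) z
      have hnt : ‖trunc ξ‖ ≤ 1 := by
        by_cases h : ‖ξ‖ ≤ 1 <;> simp [trunc, h]
      nlinarith [norm_nonneg z]
    have hnum : |Real.exp (-⟪ξ, z⟫) - 1 + ⟪trunc ξ, z⟫| ≤ 1 + ‖z‖ :=
      (abs_add_le _ _).trans (by linarith)
    have hden : 1 / ‖ξ‖ ^ 2 ≤ (k : ℝ) ^ 2 := by
      rw [div_le_iff₀ (by positivity)]
      have h1 : 1 / (k : ℝ) < ‖ξ‖ := hknorm
      have h2 : 1 < (k : ℝ) * ‖ξ‖ := by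
        rw [div_lt_iff₀ hkpos] at h1; linarith [h1]
      nlinarith
    have : ‖(Real.exp (-⟪ξ, z⟫) - 1 + ⟪trunc ξ, z⟫) / ‖ξ‖ ^ 2‖
        = |Real.exp (-⟪ξ, z⟫) - 1 + ⟪trunc ξ, z⟫| * (1 / ‖ξ‖ ^ 2) := by
      rw [Real.norm_eq_abs, abs_div, abs_of_nonneg (by positivity : (0:ℝ) ≤ ‖ξ‖ ^ 2)]
      ring
    rw [this]
    calc |Real.exp (-⟪ξ, z⟫) - 1 + ⟪trunc ξ, z⟫| * (1 / ‖ξ‖ ^ 2)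
        ≤ (1 + ‖z‖) * ((k : ℝ) ^ 2) := by
          apply mul_le_mul hnum hden (by positivity) (by positivity)
      _ = (1 + ‖z‖) * (k : ℝ) ^ 2 := rfl
  -- integrability of the comparison function
  have hgK : IntegrableOn (fun ξ : H => ⟪trunc ξ, v - u⟫ / ‖ξ‖ ^ 2) (K \ {0}) (p.ν x) :=
    p.ν_int (v - u) hw x hx hwx
  have hgS : IntegrableOn (fun ξ : H => ⟪trunc ξ, v - u⟫ / ‖ξ‖ ^ 2) S (p.ν x) :=
    hgK.mono_set hSsub
  -- nonnegativity of comparison function on K \ {0}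
  have hgnn : ∀ ξ ∈ K \ {0}, 0 ≤ ⟪trunc ξ, v - u⟫ / ‖ξ‖ ^ 2 := by
    intro ξ hξ
    apply div_nonneg _ (by positivity)
    by_cases h : ‖ξ‖ ≤ 1
    · simpa [trunc, h] using hKpos ξ hξ.1 (v - u) hw
    · simp [trunc, h]
  -- pointwise comparison on S
  have hptwise : ∀ ξ ∈ S,
      (Real.exp (-⟪ξ, v⟫) - 1 + ⟪trunc ξ, v⟫) / ‖ξ‖ ^ 2
        - (Real.exp (-⟪ξ, u⟫) - 1 + ⟪trunc ξ, u⟫) / ‖ξ‖ ^ 2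
      ≤ ⟪trunc ξ, v - u⟫ / ‖ξ‖ ^ 2 := by
    intro ξ hξ
    obtain ⟨⟨hξK, hξ0⟩, hξn⟩ := hξ
    have hkpos : (0 : ℝ) < (k : ℝ) := by exact_mod_cast hk
    have hnormpos : 0 < ‖ξ‖ := lt_trans (by positivity) hξn
    have hipw : 0 ≤ ⟪ξ, v - u⟫ := hKpos ξ hξK (v - u) hw
    have hiv : ⟪ξ, u⟫ ≤ ⟪ξ, v⟫ := by
      have := inner_sub_right (𝕜 := ℝ) ξ v u
      linarith [hipw, this]
    have hexp : Real.exp (-⟪ξ, v⟫) ≤ Real.exp (-⟪ξ, u⟫) :=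
      Real.exp_le_exp.mpr (by linarith)
    have htreq : ⟪trunc ξ, v - u⟫ = ⟪trunc ξ, v⟫ - ⟪trunc ξ, u⟫ :=
      inner_sub_right (𝕜 := ℝ) (trunc ξ) v u
    rw [div_sub_div_same]
    gcongr
    linarith
  -- assemble
  have hBq := p.B_quasi (v - u) hw x hx hwx
  rw [inner_sub_left, hRk v hv x hx, hRk u hu x hx]
  have hBadj : ⟪ContinuousLinearMap.adjoint p.B v, x⟫
      - ⟪ContinuousLinearMap.adjoint p.B u, x⟫
      = ⟪ContinuousLinearMap.adjoint p.B (v - u), x⟫ := by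
    rw [map_sub, inner_sub_left]
  have hIsub : (∫ ξ in S, (Real.exp (-⟪ξ, v⟫) - 1 + ⟪trunc ξ, v⟫) / ‖ξ‖ ^ 2 ∂(p.ν x))
      - ∫ ξ in S, (Real.exp (-⟪ξ, u⟫) - 1 + ⟪trunc ξ, u⟫) / ‖ξ‖ ^ 2 ∂(p.ν x)
      = ∫ ξ in S, ((Real.exp (-⟪ξ, v⟫) - 1 + ⟪trunc ξ, v⟫) / ‖ξ‖ ^ 2
          - (Real.exp (-⟪ξ, u⟫) - 1 + ⟪trunc ξ, u⟫) / ‖ξ‖ ^ 2) ∂(p.ν x) :=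
    (integral_sub (hint v hv) (hint u hu)).symm
  have hmono1 : (∫ ξ in S, ((Real.exp (-⟪ξ, v⟫) - 1 + ⟪trunc ξ, v⟫) / ‖ξ‖ ^ 2
        - (Real.exp (-⟪ξ, u⟫) - 1 + ⟪trunc ξ, u⟫) / ‖ξ‖ ^ 2) ∂(p.ν x))
      ≤ ∫ ξ in S, ⟪trunc ξ, v - u⟫ / ‖ξ‖ ^ 2 ∂(p.ν x) :=
    setIntegral_mono_on ((hint v hv).sub (hint u hu)) hgS hSmeas hptwise
  have hmono2 : (∫ ξ in S, ⟪trunc ξ, v - u⟫ / ‖ξ‖ ^ 2 ∂(p.ν x))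
      ≤ ∫ ξ in K \ {0}, ⟪trunc ξ, v - u⟫ / ‖ξ‖ ^ 2 ∂(p.ν x) := by
    apply setIntegral_mono_set hgK ?_ (HasSubset.Subset.eventuallyLE hSsub)
    filter_upwards [ae_restrict_mem
      (hKclosed.measurableSet.diff (measurableSet_singleton 0))] with ξ hξ
    exact hgnn ξ hξ
  linarith
end
end

section
/- Let (b, B, m, μ) be an admissible parameter set and k ∈ ℕ. Then for all u, v ∈ K one has ‖R^{(k)}(u) − R^{(k)}(v)‖ ≤ (‖B‖_{L(H)} + 2k‖μ(K∖{0})‖) ‖u − v‖. -/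
open MeasureTheory Filter
open scoped RealInnerProductSpace Topology ENNReal

noncomputable section

section Aux

variable {H : Type*} [NormedAddCommGroup H] [InnerProductSpace ℝ H]

lemma exp_neg_lip {s t : ℝ} (hs : 0 ≤ s) (ht : 0 ≤ t) :
    |Real.exp (-s) - Real.exp (-t)| ≤ |s - t| := by
  wlog h : t ≤ s generalizing s t
  · rw [abs_sub_comm, abs_sub_comm s t]; exact this ht hs (le_of_not_ge h)
  · have h1 : Real.exp (-s) ≤ Real.exp (-t) := Real.exp_le_exp.2 (by linarith)
    rw [abs_of_nonpos (by linarith), abs_of_nonneg (by linarith)]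
    have h2 : Real.exp (-t) - Real.exp (-s) = Real.exp (-t) * (1 - Real.exp (-(s - t))) := by
      rw [mul_sub, mul_one, ← Real.exp_add]; ring_nf
    have h3 : Real.exp (-t) ≤ 1 := Real.exp_le_one_iff.2 (by linarith)
    have h4 : 1 - Real.exp (-(s - t)) ≤ s - t := by
      nlinarith [Real.add_one_le_exp (-(s - t))]
    nlinarith [Real.exp_pos (-(s - t)), Real.exp_pos (-t)]

/-- Auxiliary kernel. -/
def fker (w ξ : H) : ℝ :=
  (Real.exp (-⟪ξ, w⟫) - 1 + ⟪trunc ξ, w⟫) / ‖ξ‖ ^ 2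

lemma norm_trunc_le (ξ : H) : ‖trunc ξ‖ ≤ ‖ξ‖ := by
  unfold trunc; split
  · exact le_rfl
  · simp

lemma fker_zero (ξ : H) : fker (0 : H) ξ = 0 := by
  simp [fker]

end Aux

/-- Lipschitz continuity of `R^{(k)}` on `K`:
`‖R^{(k)}(u) − R^{(k)}(v)‖ ≤ (‖B‖ + 2k‖μ(K∖{0})‖)‖u − v‖`. -/
theorem stmt_4 {H : Type*} [NormedAddCommGroup H] [InnerProductSpace ℝ H] [CompleteSpace H]
    [MeasurableSpace H] [BorelSpace H] (K : Set H)
    (hK : IsSelfDualCone K) (hKgen : ∀ z : H, ∃ x ∈ K, ∃ y ∈ K, z = x - y)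
    (p : AdmissibleParams H K) (k : ℕ) (hk : 0 < k) (Rk : H → H)
    (hRk : ∀ u ∈ K, ∀ x ∈ K, ⟪Rk u, x⟫ =
      ⟪ContinuousLinearMap.adjoint p.B u, x⟫
        - ∫ ξ in (K \ {0}) ∩ {ξ : H | 1 / (k : ℝ) < ‖ξ‖},
            (Real.exp (-⟪ξ, u⟫) - 1 + ⟪trunc ξ, u⟫) / ‖ξ‖ ^ 2 ∂(p.ν x)) :
    ∀ u ∈ K, ∀ v ∈ K,
      ‖Rk u - Rk v‖ ≤ (‖p.B‖ + 2 * (k : ℝ) * ‖p.muVec (K \ {0})‖) * ‖u - v‖ := by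
  intro u hu v hv
  set S : Set H := K \ {0} with hS
  set T : Set H := (K \ {0}) ∩ {ξ : H | 1 / (k : ℝ) < ‖ξ‖} with hTdef
  have hkpos : (0 : ℝ) < (k : ℝ) := by exact_mod_cast hk
  -- basic cone facts
  have memK : ∀ z : H, (∀ y ∈ K, 0 ≤ ⟪z, y⟫) → z ∈ K := by
    intro z hz; rw [hK]; exact hz
  have innK : ∀ x ∈ K, ∀ y ∈ K, 0 ≤ ⟪x, y⟫ := by
    intro x hx y hy; rw [hK] at hx; exact hx y hy
  have h0K : (0 : H) ∈ K := memK 0 (by intro y hy; simp)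
  have hKclosed : IsClosed K := by
    have hset : {x : H | ∀ y ∈ K, 0 ≤ ⟪x, y⟫} = ⋂ y ∈ K, {x : H | 0 ≤ ⟪x, y⟫} := by
      ext x; simp
    rw [hK, hset]
    exact isClosed_biInter fun y _ =>
      isClosed_le continuous_const (Continuous.inner continuous_id continuous_const)
  have hSm : MeasurableSet S := hKclosed.measurableSet.diff (MeasurableSet.singleton 0)
  have hTm : MeasurableSet T :=
    hSm.inter (isOpen_lt continuous_const continuous_norm).measurableSet
  -- measurability of the kernel
  have hmeas : ∀ w : H, Measurable (fun ξ : H => fker w ξ) := by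
    intro w
    have h1 : Measurable fun ξ : H => Real.exp (-⟪ξ, w⟫) :=
      (Real.continuous_exp.comp
        (Continuous.neg (Continuous.inner continuous_id continuous_const))).measurable
    have h2 : Measurable fun ξ : H => ⟪trunc ξ, w⟫ := by
      have he : (fun ξ : H => ⟪trunc ξ, w⟫) = fun ξ : H =>
          if ‖ξ‖ ≤ 1 then ⟪ξ, w⟫ else 0 := by
        funext ξ; unfold trunc; split <;> simp
      rw [he]
      exact Measurable.ite (isClosed_le continuous_norm continuous_const).measurableSet
        (Continuous.inner continuous_id continuous_const).measurable measurable_const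
    exact ((h1.sub measurable_const).add h2).div ((continuous_norm.pow 2)).measurable
  -- pointwise Lipschitz bound of the kernel on T
  have hdiff : ∀ w₁ ∈ K, ∀ w₂ ∈ K, ∀ ξ ∈ T, |fker w₁ ξ - fker w₂ ξ| ≤ 2 * k * ‖w₁ - w₂‖ := by
    intro w₁ h1 w₂ h2 ξ hξ
    obtain ⟨⟨hξK, -⟩, hξn⟩ := hξ
    have hξn' : 1 / (k : ℝ) < ‖ξ‖ := hξn
    have hnpos : (0 : ℝ) < ‖ξ‖ := lt_trans (by positivity) hξn'
    have hkξ : 1 < ‖ξ‖ * (k : ℝ) := (div_lt_iff₀ hkpos).1 hξn'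
    have e1 : |Real.exp (-⟪ξ, w₁⟫) - Real.exp (-⟪ξ, w₂⟫)| ≤ |⟪ξ, w₁⟫ - ⟪ξ, w₂⟫| :=
      exp_neg_lip (innK ξ hξK w₁ h1) (innK ξ hξK w₂ h2)
    have e2 : ⟪ξ, w₁⟫ - ⟪ξ, w₂⟫ = ⟪ξ, w₁ - w₂⟫ := (inner_sub_right _ _ _).symm
    have e3 : |⟪ξ, w₁ - w₂⟫| ≤ ‖ξ‖ * ‖w₁ - w₂‖ := abs_real_inner_le_norm _ _
    have e4 : |⟪trunc ξ, w₁⟫ - ⟪trunc ξ, w₂⟫| ≤ ‖ξ‖ * ‖w₁ - w₂‖ := by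
      rw [← inner_sub_right]
      exact (abs_real_inner_le_norm _ _).trans
        (mul_le_mul_of_nonneg_right (norm_trunc_le ξ) (norm_nonneg _))
    have hfd : fker w₁ ξ - fker w₂ ξ =
        ((Real.exp (-⟪ξ, w₁⟫) - Real.exp (-⟪ξ, w₂⟫))
          + (⟪trunc ξ, w₁⟫ - ⟪trunc ξ, w₂⟫)) / ‖ξ‖ ^ 2 := by
      unfold fker; ring
    rw [hfd, abs_div, abs_of_nonneg (by positivity : (0:ℝ) ≤ ‖ξ‖ ^ 2),
      div_le_iff₀ (by positivity)]
    have habs : |(Real.exp (-⟪ξ, w₁⟫) - Real.exp (-⟪ξ, w₂⟫))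
        + (⟪trunc ξ, w₁⟫ - ⟪trunc ξ, w₂⟫)| ≤ 2 * (‖ξ‖ * ‖w₁ - w₂‖) := by
      calc _ ≤ |Real.exp (-⟪ξ, w₁⟫) - Real.exp (-⟪ξ, w₂⟫)|
            + |⟪trunc ξ, w₁⟫ - ⟪trunc ξ, w₂⟫| := abs_add_le _ _
        _ ≤ ‖ξ‖ * ‖w₁ - w₂‖ + ‖ξ‖ * ‖w₁ - w₂‖ := by
            refine add_le_add ?_ e4
            calc _ ≤ |⟪ξ, w₁⟫ - ⟪ξ, w₂⟫| := e1
              _ = |⟪ξ, w₁ - w₂⟫| := by rw [e2]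
              _ ≤ _ := e3
        _ = 2 * (‖ξ‖ * ‖w₁ - w₂‖) := by ring
    have hstep : 2 * (‖ξ‖ * ‖w₁ - w₂‖) ≤ 2 * (k : ℝ) * ‖w₁ - w₂‖ * ‖ξ‖ ^ 2 := by
      nlinarith [mul_nonneg (norm_nonneg (w₁ - w₂)) hnpos.le, hkξ]
    linarith [habs]
  -- integrability of the kernel on T
  have hint : ∀ w ∈ K, ∀ x ∈ K, Integrable (fun ξ => fker w ξ) ((p.ν x).restrict T) := by
    intro w hw x hx
    haveI := p.ν_finite x hx
    refine Integrable.mono' (integrable_const (2 * (k : ℝ) * ‖w‖))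
      (hmeas w).aestronglyMeasurable ?_
    refine ae_restrict_of_forall_mem hTm ?_
    intro ξ hξ
    have h := hdiff w hw 0 h0K ξ hξ
    simpa [fker_zero, Real.norm_eq_abs] using h
  -- the difference vector
  set A : H := ContinuousLinearMap.adjoint p.B (u - v) with hA
  set D : H := Rk u - Rk v - A with hD
  set M : ℝ := 2 * (k : ℝ) * ‖u - v‖ with hM
  have hMnn : 0 ≤ M := by positivity
  set c : H := M • p.muVec S with hc
  have hDx : ∀ x ∈ K, ⟪D, x⟫ = ∫ ξ in T, (fker v ξ - fker u ξ) ∂(p.ν x) := by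
    intro x hx
    have h1 := hRk u hu x hx
    have h2 := hRk v hv x hx
    have h3 : ∫ ξ in T, (fker v ξ - fker u ξ) ∂(p.ν x)
        = (∫ ξ in T, fker v ξ ∂(p.ν x)) - ∫ ξ in T, fker u ξ ∂(p.ν x) :=
      integral_sub (hint v hv x hx) (hint u hu x hx)
    have h4 : ⟪D, x⟫ = ⟪Rk u, x⟫ - ⟪Rk v, x⟫
        - (⟪ContinuousLinearMap.adjoint p.B u, x⟫ - ⟪ContinuousLinearMap.adjoint p.B v, x⟫) := by
      rw [hD, hA, map_sub, inner_sub_left, inner_sub_left, inner_sub_left]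
    have h5 : (∫ ξ in T, fker u ξ ∂(p.ν x)) =
        ∫ ξ in T, (Real.exp (-⟪ξ, u⟫) - 1 + ⟪trunc ξ, u⟫) / ‖ξ‖ ^ 2 ∂(p.ν x) := rfl
    have h6 : (∫ ξ in T, fker v ξ ∂(p.ν x)) =
        ∫ ξ in T, (Real.exp (-⟪ξ, v⟫) - 1 + ⟪trunc ξ, v⟫) / ‖ξ‖ ^ 2 ∂(p.ν x) := rfl
    rw [h4, h1, h2, h3, h5, h6]; ring
  have hDbound : ∀ x ∈ K, |⟪D, x⟫| ≤ ⟪c, x⟫ := by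
    intro x hx
    haveI := p.ν_finite x hx
    rw [hDx x hx]
    have hb : ‖∫ ξ in T, (fker v ξ - fker u ξ) ∂(p.ν x)‖
        ≤ M * ((p.ν x).restrict T Set.univ).toReal := by
      refine norm_integral_le_of_norm_le_const ?_
      refine ae_restrict_of_forall_mem hTm ?_
      intro ξ hξ
      have h := hdiff v hv u hu ξ hξ
      rw [norm_sub_rev v u] at h
      simpa [Real.norm_eq_abs] using h
    rw [Measure.restrict_apply_univ] at hb
    have hmono : ((p.ν x) T).toReal ≤ ((p.ν x) S).toReal :=
      ENNReal.toReal_mono (measure_ne_top _ _) (measure_mono Set.inter_subset_left)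
    have hcx : ⟪c, x⟫ = M * ((p.ν x) S).toReal := by
      rw [hc, real_inner_smul_left, p.muVec_spec S hSm x hx]
    rw [Real.norm_eq_abs] at hb
    calc |∫ ξ in T, (fker v ξ - fker u ξ) ∂(p.ν x)| ≤ M * ((p.ν x) T).toReal := hb
      _ ≤ M * ((p.ν x) S).toReal := mul_le_mul_of_nonneg_left hmono hMnn
      _ = ⟪c, x⟫ := hcx.symm
  have hcK : c ∈ K := memK c <| by
    intro y hy
    rw [hc, real_inner_smul_left]
    exact mul_nonneg hMnn (innK _ (p.muVec_mem S hSm) y hy)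
  have h1K : c - D ∈ K := memK _ <| by
    intro y hy
    rw [inner_sub_left]
    have := abs_le.1 (hDbound y hy)
    linarith [this.2]
  have h2K : c + D ∈ K := memK _ <| by
    intro y hy
    rw [inner_add_left]
    have := abs_le.1 (hDbound y hy)
    linarith [this.1]
  have hDnorm : ‖D‖ ≤ ‖c‖ := by
    have h3 : 0 ≤ ⟪c - D, c + D⟫ := innK _ h1K _ h2K
    have h4 : ⟪c - D, c + D⟫ = ‖c‖ ^ 2 - ‖D‖ ^ 2 := by
      rw [inner_sub_left, inner_add_right, inner_add_right,
        real_inner_self_eq_norm_sq, real_inner_self_eq_norm_sq, real_inner_comm D c]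
      ring
    nlinarith [norm_nonneg D, norm_nonneg c]
  have hcnorm : ‖c‖ = M * ‖p.muVec S‖ := by
    rw [hc, norm_smul, Real.norm_eq_abs, abs_of_nonneg hMnn]
  have hAnorm : ‖A‖ ≤ ‖p.B‖ * ‖u - v‖ := by
    calc ‖A‖ ≤ ‖ContinuousLinearMap.adjoint p.B‖ * ‖u - v‖ :=
        ContinuousLinearMap.le_opNorm _ _
      _ = ‖p.B‖ * ‖u - v‖ := by
        rw [LinearIsometryEquiv.norm_map (ContinuousLinearMap.adjoint) p.B]
  have hsplit : Rk u - Rk v = A + D := by rw [hD]; abel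
  calc ‖Rk u - Rk v‖ = ‖A + D‖ := by rw [hsplit]
    _ ≤ ‖A‖ + ‖D‖ := norm_add_le _ _
    _ ≤ ‖p.B‖ * ‖u - v‖ + M * ‖p.muVec S‖ := by
        refine add_le_add hAnorm (hDnorm.trans_eq hcnorm)
    _ = (‖p.B‖ + 2 * (k : ℝ) * ‖p.muVec S‖) * ‖u - v‖ := by rw [hM]; ring
end
end
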